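/- Let μ be a Borel probability measure on ℝⁿ and ρ a positive smooth mollifier in L¹ ∩ W^{∞,∞} with ∫ρ = 1 and ρ(x) ≥ |x|^{-m₀} for |x| ≥ 1, m₀ > n. Set h_ε = μ * ρ_ε and φ_ε = √(h_ε). Then for every compact K ⊆ ℝⁿ and every multi-index α there exist C > 0 and N ∈ ℕ such that sup_{x∈K} |∂^α φ_ε(x)| ≤ C ε^{-N} for all sufficiently small ε > 0 (i.e., (φ_ε) is C^∞-moderate). -/

import Mathlib

open MeasureTheory Real

noncomputable def pderiv1 {n : ℕ} (i : Fin n) (f : EuclideanSpace ℝ (Fin n) → ℝ) :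
    EuclideanSpace ℝ (Fin n) → ℝ :=
  fun x => fderiv ℝ f x (EuclideanSpace.single i 1)

/-- Iterated partial derivative `∂^α` encoded by a list of coordinate directions. -/
noncomputable def multiDeriv {n : ℕ} (l : List (Fin n)) (f : EuclideanSpace ℝ (Fin n) → ℝ) :
    EuclideanSpace ℝ (Fin n) → ℝ :=
  l.foldr pderiv1 f

open ContDiff
set_option synthInstance.maxHeartbeats 1000000
set_option maxHeartbeats 1000000
set_option linter.unusedVariables false
set_option linter.unnecessarySimpa false
set_option linter.deprecated false

section basics
variable {n : ℕ} {f g : EuclideanSpace ℝ (Fin n) → ℝ} {i : Fin n}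

lemma multiDeriv_cons (i : Fin n) (l : List (Fin n)) (f : EuclideanSpace ℝ (Fin n) → ℝ) :
    multiDeriv (i :: l) f = pderiv1 i (multiDeriv l f) := rfl

lemma multiDeriv_append (l₁ l₂ : List (Fin n)) (f : EuclideanSpace ℝ (Fin n) → ℝ) :
    multiDeriv (l₁ ++ l₂) f = multiDeriv l₁ (multiDeriv l₂ f) := by
  simp [multiDeriv, List.foldr_append]

lemma contDiff_pderiv1 (hf : ContDiff ℝ ∞ f) : ContDiff ℝ ∞ (pderiv1 i f) :=
  ((hf.fderiv_right (le_of_eq rfl)).clm_apply contDiff_const)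

lemma contDiff_multiDeriv (l : List (Fin n)) (hf : ContDiff ℝ ∞ f) :
    ContDiff ℝ ∞ (multiDeriv l f) := by
  induction l with
  | nil => exact hf
  | cons a l ih => exact contDiff_pderiv1 ih

lemma pderiv1_const_mul (c : ℝ) (hf : Differentiable ℝ f) (i : Fin n) :
    pderiv1 i (fun x => c * f x) = fun x => c * pderiv1 i f x := by
  funext x
  simp only [pderiv1]
  rw [fderiv_const_mul (hf x) c]
  simp

lemma multiDeriv_const_mul (c : ℝ) (hf : ContDiff ℝ ∞ f) (l : List (Fin n)) :
    multiDeriv l (fun x => c * f x) = fun x => c * multiDeriv l f x := by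
  induction l with
  | nil => rfl
  | cons a l ih =>
    rw [multiDeriv_cons, ih, multiDeriv_cons,
      pderiv1_const_mul c ((contDiff_multiDeriv l hf).differentiable (by simp))]
end basics
section lists
variable {n : ℕ} {ι : Type*} {f g : EuclideanSpace ℝ (Fin n) → ℝ} {i : Fin n}

lemma list_sum_map_add (L : List ι) (A B : ι → ℝ) :
    (L.map (fun p => A p + B p)).sum = (L.map A).sum + (L.map B).sum := by
  induction L with
  | nil => simp
  | cons a L ih => simp [ih]; ring
end lists
section lists2
variable {n : ℕ} {ι : Type*} {f g : EuclideanSpace ℝ (Fin n) → ℝ} {i : Fin n}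

lemma differentiable_list_sum (L : List ι) (F : ι → EuclideanSpace ℝ (Fin n) → ℝ)
    (h : ∀ p ∈ L, Differentiable ℝ (F p)) :
    Differentiable ℝ (fun x => (L.map (fun p => F p x)).sum) := by
  induction L with
  | nil => simpa using differentiable_const (0:ℝ)
  | cons a L ih =>
    simp only [List.map_cons, List.sum_cons]
    exact (h a (by simp)).add (ih fun p hp => h p (by simp [hp]))

lemma pderiv1_list_sum (i : Fin n) (L : List ι) (F : ι → EuclideanSpace ℝ (Fin n) → ℝ)
    (h : ∀ p ∈ L, Differentiable ℝ (F p)) :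
    pderiv1 i (fun x => (L.map (fun p => F p x)).sum)
      = fun x => (L.map (fun p => pderiv1 i (F p) x)).sum := by
  induction L with
  | nil => funext x; simp [pderiv1]
  | cons a L ih =>
    funext x
    simp only [List.map_cons, List.sum_cons]
    have hd : Differentiable ℝ (fun x => (L.map (fun p => F p x)).sum) :=
      differentiable_list_sum L F fun p hp => h p (by simp [hp])
    have : pderiv1 i (fun x => F a x + (L.map (fun p => F p x)).sum) x
        = pderiv1 i (F a) x + pderiv1 i (fun x => (L.map (fun p => F p x)).sum) x := by
      simp only [pderiv1]
      rw [fderiv_fun_add ((h a (by simp)) x) (hd x)]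
      simp
    rw [this, ih fun p hp => h p (by simp [hp])]

lemma pderiv1_mul (hf : Differentiable ℝ f) (hg : Differentiable ℝ g) (i : Fin n) :
    pderiv1 i (fun x => f x * g x) = fun x => pderiv1 i f x * g x + f x * pderiv1 i g x := by
  funext x
  simp only [pderiv1]
  rw [fderiv_fun_mul (hf x) (hg x)]
  simp
  ring

def splits {n : ℕ} : List (Fin n) → List (List (Fin n) × List (Fin n))
  | [] => [([], [])]
  | a :: l => ((splits l).map fun p => (a :: p.1, p.2)) ++ ((splits l).map fun p => (p.1, a :: p.2))

lemma multiDeriv_mul (hf : ContDiff ℝ ∞ f) (hg : ContDiff ℝ ∞ g) (l : List (Fin n)) :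
    multiDeriv l (fun x => f x * g x)
      = fun x => ((splits l).map (fun p => multiDeriv p.1 f x * multiDeriv p.2 g x)).sum := by
  induction l with
  | nil => funext x; simp [splits, multiDeriv]
  | cons a l ih =>
    rw [multiDeriv_cons, ih]
    have hdiff : ∀ p ∈ splits l,
        Differentiable ℝ (fun x => multiDeriv p.1 f x * multiDeriv p.2 g x) := by
      intro p _
      exact ((contDiff_multiDeriv p.1 hf).mul (contDiff_multiDeriv p.2 hg)).differentiable
        (by simp)
    rw [pderiv1_list_sum a (splits l) _ hdiff]
    funext x
    have hterm : ∀ p ∈ splits l,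
        pderiv1 a (fun x => multiDeriv p.1 f x * multiDeriv p.2 g x) x
          = multiDeriv (a :: p.1) f x * multiDeriv p.2 g x
            + multiDeriv p.1 f x * multiDeriv (a :: p.2) g x := by
      intro p _
      rw [pderiv1_mul ((contDiff_multiDeriv p.1 hf).differentiable (by simp))
        ((contDiff_multiDeriv p.2 hg).differentiable (by simp)) a]
      rfl
    rw [List.map_congr_left hterm]
    rw [list_sum_map_add (splits l)
      (fun p => multiDeriv (a :: p.1) f x * multiDeriv p.2 g x)
      (fun p => multiDeriv p.1 f x * multiDeriv (a :: p.2) g x)]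
    simp [splits, List.map_map, Function.comp_def]
end lists2
section splitsstruct
variable {n : ℕ}

lemma splits_structure : ∀ l : List (Fin n), l ≠ [] →
    ∃ mid : List (List (Fin n) × List (Fin n)),
      splits l = (l, ([] : List (Fin n))) :: (mid ++ [(([] : List (Fin n)), l)]) ∧
      ∀ p ∈ mid, p.1.length < l.length ∧ p.2.length < l.length := by
  intro l
  induction l with
  | nil => intro h; exact absurd rfl h
  | cons a l ih =>
    intro _
    rcases eq_or_ne l [] with rfl | hl
    · exact ⟨[], by simp [splits], by simp⟩
    · obtain ⟨m, hm, hlen⟩ := ih hl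
      refine ⟨(m.map fun p => (a :: p.1, p.2)) ++ [([a], l), (l, [a])]
          ++ (m.map fun p => (p.1, a :: p.2)), ?_, ?_⟩
      · simp only [splits, hm]
        simp [List.map_append, List.map_map, Function.comp_def]
      · intro p hp
        simp only [List.mem_append, List.mem_map, List.mem_cons, List.mem_singleton] at hp
        rcases hp with (⟨q, hq, rfl⟩ | h2) | ⟨q, hq, rfl⟩
        · exact ⟨by simpa using Nat.succ_lt_succ (hlen q hq).1,
            lt_trans (hlen q hq).2 (by simp)⟩
        · rcases h2 with rfl | (rfl | h3)
          · constructor <;> simp [Nat.lt_succ_iff, List.length_pos_iff, hl]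
          · constructor <;> simp [Nat.lt_succ_iff, List.length_pos_iff, hl]
          · exact absurd h3 List.not_mem_nil
        · exact ⟨lt_trans (hlen q hq).1 (by simp),
            by simpa using Nat.succ_lt_succ (hlen q hq).2⟩
end splitsstruct
section clm
variable {n : ℕ}

lemma clm_apply_eq_sum (L : EuclideanSpace ℝ (Fin n) →L[ℝ] ℝ) (v : EuclideanSpace ℝ (Fin n)) :
    L v = ∑ i, v i * L (EuclideanSpace.single i 1) := by
  have hv : v = ∑ i, v i • (EuclideanSpace.single i (1:ℝ)) := by
    have := (EuclideanSpace.basisFun (Fin n) ℝ).sum_repr v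
    simpa [EuclideanSpace.basisFun_apply, EuclideanSpace.basisFun_repr] using this.symm
  conv_lhs => rw [hv]
  rw [map_sum]
  simp [smul_eq_mul]

lemma abs_coord_le_norm (v : EuclideanSpace ℝ (Fin n)) (i : Fin n) : |v i| ≤ ‖v‖ := by
  have h1 : |v i| = Real.sqrt ((v i)^2) := by rw [Real.sqrt_sq_eq_abs]
  rw [h1, EuclideanSpace.norm_eq]
  apply Real.sqrt_le_sqrt
  have : (v i)^2 ≤ ∑ j, (v j)^2 :=
    Finset.single_le_sum (fun j _ => sq_nonneg (v j)) (Finset.mem_univ i)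
  simpa [sq_abs] using this

lemma clm_opNorm_le_sum (L : EuclideanSpace ℝ (Fin n) →L[ℝ] ℝ) :
    ‖L‖ ≤ ∑ i, |L (EuclideanSpace.single i 1)| := by
  apply ContinuousLinearMap.opNorm_le_bound
  · exact Finset.sum_nonneg fun i _ => abs_nonneg _
  · intro v
    rw [Real.norm_eq_abs, clm_apply_eq_sum L v]
    calc |∑ i, v i * L (EuclideanSpace.single i 1)|
        ≤ ∑ i, |v i * L (EuclideanSpace.single i 1)| := Finset.abs_sum_le_sum_abs _ _
      _ ≤ ∑ i, ‖v‖ * |L (EuclideanSpace.single i 1)| := by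
          apply Finset.sum_le_sum
          intro i _
          rw [abs_mul]
          exact mul_le_mul_of_nonneg_right (abs_coord_le_norm v i) (abs_nonneg _)
      _ = (∑ i, |L (EuclideanSpace.single i 1)|) * ‖v‖ := by
          rw [← Finset.mul_sum, mul_comm]

lemma clm_eq_sum_proj (L : EuclideanSpace ℝ (Fin n) →L[ℝ] ℝ) :
    L = ∑ i, L (EuclideanSpace.single i 1) • (EuclideanSpace.proj i (𝕜 := ℝ)) := by
  ext v
  rw [clm_apply_eq_sum L v]
  simp [mul_comm]
end clm
section conv
variable {n : ℕ}

/-- Admissible integrand: smooth with all iterated partials bounded. -/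
def Adm {n : ℕ} (g : EuclideanSpace ℝ (Fin n) → ℝ) : Prop :=
  ContDiff ℝ ∞ g ∧ ∀ l : List (Fin n), ∃ B, ∀ x, |multiDeriv l g x| ≤ B

noncomputable def cv {n : ℕ} (μ : Measure (EuclideanSpace ℝ (Fin n))) (ε : ℝ)
    (g : EuclideanSpace ℝ (Fin n) → ℝ) : EuclideanSpace ℝ (Fin n) → ℝ :=
  fun x => ∫ y, g (ε⁻¹ • (x - y)) ∂μ

variable {μ : Measure (EuclideanSpace ℝ (Fin n))} [IsProbabilityMeasure μ]
  {g : EuclideanSpace ℝ (Fin n) → ℝ} {ε : ℝ}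

lemma Adm.pderiv1' (hg : Adm g) (i : Fin n) : Adm (pderiv1 i g) := by
  refine ⟨contDiff_pderiv1 hg.1, fun l => ?_⟩
  obtain ⟨B, hB⟩ := hg.2 (l ++ [i])
  refine ⟨B, fun x => ?_⟩
  have : multiDeriv (l ++ [i]) g = multiDeriv l (pderiv1 i g) := multiDeriv_append l [i] g
  rw [← this]; exact hB x

lemma Adm.multiDeriv' (hg : Adm g) (l : List (Fin n)) : Adm (multiDeriv l g) := by
  induction l with
  | nil => exact hg
  | cons a l ih => exact ih.pderiv1' a

lemma Adm.integrable_comp (hg : Adm g) (hε : 0 < ε) (x : EuclideanSpace ℝ (Fin n)) :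
    Integrable (fun y => g (ε⁻¹ • (x - y))) μ := by
  obtain ⟨B, hB⟩ := hg.2 []
  have hc : Continuous fun y : EuclideanSpace ℝ (Fin n) => g (ε⁻¹ • (x - y)) :=
    (hg.1.continuous).comp ((continuous_const.sub continuous_id).const_smul ε⁻¹)
  refine Integrable.mono' (integrable_const B) hc.aestronglyMeasurable ?_
  filter_upwards with y
  simpa [Real.norm_eq_abs, multiDeriv] using hB (ε⁻¹ • (x - y))

lemma Adm.norm_fderiv_le (hg : Adm g) :
    ∃ B, 0 ≤ B ∧ ∀ z, ‖fderiv ℝ g z‖ ≤ B := by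
  choose B hB using fun i : Fin n => (hg.pderiv1' i).2 []
  refine ⟨∑ i, |B i|, Finset.sum_nonneg fun i _ => abs_nonneg _, fun z => ?_⟩
  calc ‖fderiv ℝ g z‖ ≤ ∑ i, |fderiv ℝ g z (EuclideanSpace.single i 1)| :=
        clm_opNorm_le_sum _
    _ ≤ ∑ i, |B i| := by
        apply Finset.sum_le_sum
        intro i _
        exact le_trans (by simpa [pderiv1, multiDeriv] using hB i z) (le_abs_self _)
end conv
section conv2
variable {n : ℕ} {μ : Measure (EuclideanSpace ℝ (Fin n))} [IsProbabilityMeasure μ]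
  {g : EuclideanSpace ℝ (Fin n) → ℝ} {ε : ℝ}

lemma inner_hasFDerivAt (hg : Adm g) (hε : 0 < ε) (y x : EuclideanSpace ℝ (Fin n)) :
    HasFDerivAt (fun x => g (ε⁻¹ • (x - y)))
      (ε⁻¹ • fderiv ℝ g (ε⁻¹ • (x - y))) x := by
  have h1 : HasFDerivAt (fun x : EuclideanSpace ℝ (Fin n) => ε⁻¹ • (x - y))
      (ε⁻¹ • ContinuousLinearMap.id ℝ (EuclideanSpace ℝ (Fin n))) x :=
    ((hasFDerivAt_id x).sub_const y).const_smul ε⁻¹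
  have h2 : HasFDerivAt g (fderiv ℝ g (ε⁻¹ • (x - y))) (ε⁻¹ • (x - y)) :=
    (hg.1.differentiable (by simp) _).hasFDerivAt
  have := h2.comp x h1
  refine this.congr_fderiv ?_
  ext v
  simp [ContinuousLinearMap.smul_apply]

lemma cv_hasFDerivAt (hg : Adm g) (hε : 0 < ε) (x₀ : EuclideanSpace ℝ (Fin n)) :
    HasFDerivAt (cv μ ε g)
      (∫ y, ε⁻¹ • fderiv ℝ g (ε⁻¹ • (x₀ - y)) ∂μ) x₀ := by
  obtain ⟨B, hB0, hB⟩ := hg.norm_fderiv_le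
  have hcont : Continuous (fderiv ℝ g) := hg.1.continuous_fderiv (by simp)
  apply hasFDerivAt_integral_of_dominated_of_fderiv_le
    (F' := fun x y => ε⁻¹ • fderiv ℝ g (ε⁻¹ • (x - y))) (bound := fun _ => ε⁻¹ * B)
    (Filter.univ_mem)
  · filter_upwards with x
    exact ((hg.1.continuous).comp
      ((continuous_const.sub continuous_id).const_smul ε⁻¹)).aestronglyMeasurable
  · exact hg.integrable_comp hε x₀
  · exact (((hcont.comp ((continuous_const.sub continuous_id).const_smul
      ε⁻¹))).const_smul ε⁻¹).aestronglyMeasurable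
  · filter_upwards with y
    intro x _
    rw [norm_smul ε⁻¹ (fderiv ℝ g (ε⁻¹ • (x - y)))]
    simp only [norm_inv, Real.norm_eq_abs, abs_of_pos hε]
    exact mul_le_mul_of_nonneg_left (hB _) (by positivity)
  · exact integrable_const _
  · filter_upwards with y
    intro x _
    exact inner_hasFDerivAt hg hε y x
end conv2
section conv3
variable {n : ℕ} {μ : Measure (EuclideanSpace ℝ (Fin n))} [IsProbabilityMeasure μ]
  {g : EuclideanSpace ℝ (Fin n) → ℝ} {ε : ℝ}

lemma Fprime_integrable (hg : Adm g) (hε : 0 < ε) (x₀ : EuclideanSpace ℝ (Fin n)) :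
    Integrable (fun y => ε⁻¹ • fderiv ℝ g (ε⁻¹ • (x₀ - y))) μ := by
  obtain ⟨B, hB0, hB⟩ := hg.norm_fderiv_le
  have hcont : Continuous (fderiv ℝ g) := hg.1.continuous_fderiv (by simp)
  refine Integrable.mono' (integrable_const (ε⁻¹ * B))
    ((((hcont.comp ((continuous_const.sub continuous_id).const_smul
      ε⁻¹))).const_smul ε⁻¹).aestronglyMeasurable) ?_
  filter_upwards with y
  rw [norm_smul ε⁻¹ (fderiv ℝ g (ε⁻¹ • (x₀ - y)))]
  simp only [norm_inv, Real.norm_eq_abs, abs_of_pos hε]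
  exact mul_le_mul_of_nonneg_left (hB _) (by positivity)

lemma cv_fderiv (hg : Adm g) (hε : 0 < ε) :
    fderiv ℝ (cv μ ε g)
      = fun x => ∑ i, (ε⁻¹ * cv μ ε (pderiv1 i g) x) • (EuclideanSpace.proj i (𝕜 := ℝ)) := by
  funext x
  rw [(cv_hasFDerivAt hg hε x).fderiv]
  ext v
  rw [ContinuousLinearMap.integral_apply (Fprime_integrable hg hε x) v]
  have hpt : ∀ y, (ε⁻¹ • fderiv ℝ g (ε⁻¹ • (x - y))) v
      = ∑ i, v i * (ε⁻¹ * pderiv1 i g (ε⁻¹ • (x - y))) := by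
    intro y
    rw [ContinuousLinearMap.smul_apply, clm_apply_eq_sum (fderiv ℝ g (ε⁻¹ • (x - y))) v]
    rw [smul_eq_mul, Finset.mul_sum]
    congr 1; funext i; simp [pderiv1]; ring
  rw [integral_congr_ae (Filter.Eventually.of_forall hpt)]
  rw [MeasureTheory.integral_finset_sum]
  · simp only [ContinuousLinearMap.sum_apply, ContinuousLinearMap.smul_apply]
    congr 1; funext i
    rw [integral_const_mul, integral_const_mul]
    simp only [smul_eq_mul, cv, PiLp.proj_apply]
    ring
  · intro i _
    apply Integrable.const_mul
    exact Integrable.const_mul (((hg.pderiv1' i).integrable_comp hε x)) _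
end conv3
section conv4
variable {n : ℕ} {μ : Measure (EuclideanSpace ℝ (Fin n))} [IsProbabilityMeasure μ]
  {g : EuclideanSpace ℝ (Fin n) → ℝ} {ε : ℝ}

lemma cv_differentiable (hg : Adm g) (hε : 0 < ε) : Differentiable ℝ (cv μ ε g) :=
  fun x => (cv_hasFDerivAt hg hε x).differentiableAt

lemma cv_contDiff_nat (m : ℕ) : ∀ g : EuclideanSpace ℝ (Fin n) → ℝ, Adm g → 0 < ε →
    ContDiff ℝ (m : WithTop ℕ∞) (cv μ ε g) := by
  induction m with
  | zero =>
    intro g hg hε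
    exact contDiff_zero.2 (cv_differentiable hg hε).continuous
  | succ m ih =>
    intro g hg hε
    have : ((m + 1 : ℕ) : WithTop ℕ∞) = (m : WithTop ℕ∞) + 1 := by push_cast; rfl
    rw [this, contDiff_succ_iff_fderiv]
    refine ⟨cv_differentiable hg hε, by simp, ?_⟩
    rw [cv_fderiv hg hε]
    apply ContDiff.sum
    intro i _
    exact (contDiff_const.mul (ih (pderiv1 i g) (hg.pderiv1' i) hε)).smul contDiff_const

lemma cv_contDiff (hg : Adm g) (hε : 0 < ε) : ContDiff ℝ ∞ (cv μ ε g) := by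
  rw [contDiff_infty]
  intro m
  exact cv_contDiff_nat m g hg hε

lemma cv_pderiv1 (hg : Adm g) (hε : 0 < ε) (i : Fin n) :
    pderiv1 i (cv μ ε g) = fun x => ε⁻¹ * cv μ ε (pderiv1 i g) x := by
  funext x
  show fderiv ℝ (cv μ ε g) x (EuclideanSpace.single i 1) = _
  rw [cv_fderiv hg hε]
  simp [PiLp.proj_apply, EuclideanSpace.single_apply]

lemma cv_multiDeriv (hg : Adm g) (hε : 0 < ε) (l : List (Fin n)) :
    multiDeriv l (cv μ ε g) = fun x => (ε⁻¹) ^ l.length * cv μ ε (multiDeriv l g) x := by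
  induction l with
  | nil => funext x; simp [multiDeriv]
  | cons a l ih =>
    rw [multiDeriv_cons, ih]
    rw [pderiv1_const_mul _ (cv_differentiable (hg.multiDeriv' l) hε) a,
      cv_pderiv1 (hg.multiDeriv' l) hε a]
    funext x
    rw [multiDeriv_cons]
    simp [pow_succ]
    ring

lemma cv_abs_le (hε : 0 < ε) {B : ℝ} (hB : ∀ x, |g x| ≤ B) (x : EuclideanSpace ℝ (Fin n)) :
    |cv μ ε g x| ≤ B := by
  have := norm_integral_le_of_norm_le_const (μ := μ)
    (f := fun y => g (ε⁻¹ • (x - y))) (C := B) ?_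
  · simpa [cv, Real.norm_eq_abs] using this
  · filter_upwards with y
    simpa [Real.norm_eq_abs] using hB _
end conv4
section lower
variable {n : ℕ} {μ : Measure (EuclideanSpace ℝ (Fin n))} [IsProbabilityMeasure μ]
  {g : EuclideanSpace ℝ (Fin n) → ℝ} {ε : ℝ}

lemma cv_pos (hg : Adm g) (hgpos : ∀ x, 0 < g x) (hε : 0 < ε)
    (x : EuclideanSpace ℝ (Fin n)) : 0 < cv μ ε g x := by
  rw [cv]
  rw [integral_pos_iff_support_of_nonneg_ae
    (Filter.Eventually.of_forall fun y => (hgpos _).le) (hg.integrable_comp hε x)]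
  have : (Function.support fun y => g (ε⁻¹ • (x - y))) = Set.univ := by
    ext y; simp [Function.support, (hgpos _).ne']
  rw [this]
  simp

/-- a ball carrying at least half of the mass -/
lemma exists_half_ball (μ : Measure (EuclideanSpace ℝ (Fin n))) [IsProbabilityMeasure μ] :
    ∃ R : ℝ, 0 < R ∧ (1/2 : ℝ) ≤ (μ (Metric.closedBall 0 R)).toReal := by
  have hu : (⋃ k : ℕ, Metric.closedBall (0 : EuclideanSpace ℝ (Fin n)) k) = Set.univ := by
    ext x
    simp only [Set.mem_iUnion, Metric.mem_closedBall, Set.mem_univ, iff_true]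
    obtain ⟨k, hk⟩ := exists_nat_ge (dist x 0)
    exact ⟨k, hk⟩
  have hmono : Monotone fun k : ℕ => Metric.closedBall (0 : EuclideanSpace ℝ (Fin n)) k := by
    intro a b hab
    exact Metric.closedBall_subset_closedBall (by exact_mod_cast hab)
  have htend := MeasureTheory.tendsto_measure_iUnion_atTop (μ := μ) hmono
  rw [hu, measure_univ] at htend
  have hev : ∀ᶠ k : ℕ in Filter.atTop, (1/2 : ENNReal) < μ (Metric.closedBall 0 k) :=
    htend.eventually (eventually_gt_nhds (by norm_num))
  obtain ⟨k, hk⟩ := hev.exists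
  refine ⟨(k : ℝ) + 1, by positivity, ?_⟩
  have hsub : Metric.closedBall (0 : EuclideanSpace ℝ (Fin n)) k ⊆
        Metric.closedBall 0 ((k : ℝ) + 1) :=
      Metric.closedBall_subset_closedBall (by linarith)
  have h1 : (1/2 : ENNReal) ≤ μ (Metric.closedBall 0 ((k:ℝ)+1)) :=
    le_trans hk.le (measure_mono hsub)
  have hne : μ (Metric.closedBall 0 ((k:ℝ)+1)) ≠ ⊤ := measure_ne_top μ _
  have := ENNReal.toReal_mono hne h1
  simpa using this
end lower
section lower2
variable {n : ℕ} {μ : Measure (EuclideanSpace ℝ (Fin n))} [IsProbabilityMeasure μ]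

lemma cv_lower (ρ : EuclideanSpace ℝ (Fin n) → ℝ) (hρ : Adm ρ) (hρpos : ∀ x, 0 < ρ x)
    (m₀ : ℝ) (hm₀pos : 0 < m₀)
    (hρ_low : ∀ z : EuclideanSpace ℝ (Fin n), 1 ≤ ‖z‖ → ‖z‖ ^ (-m₀) ≤ ρ z)
    (K : Set (EuclideanSpace ℝ (Fin n))) (hK : IsCompact K) :
    ∃ c > (0:ℝ), ∃ ε₁ : ℝ, 0 < ε₁ ∧ ε₁ ≤ 1 ∧ ∀ ε : ℝ, 0 < ε → ε ≤ ε₁ → ∀ x ∈ K,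
      c * ε ^ m₀ ≤ cv μ ε ρ x := by
  obtain ⟨r, hr⟩ := hK.isBounded.subset_closedBall 0
  obtain ⟨R₂, hR₂pos, hR₂⟩ := exists_half_ball μ
  set M : ℝ := max r 0 + R₂ + 1 with hM
  have hMpos : 0 < M := by positivity
  obtain ⟨z₀, hz₀mem, hz₀min⟩ := (isCompact_closedBall (0 : EuclideanSpace ℝ (Fin n)) 1).exists_isMinOn
    ⟨0, by simp⟩ (hρ.1.continuous.continuousOn)
  set c₀ : ℝ := ρ z₀ with hc₀
  have hc₀pos : 0 < c₀ := hρpos z₀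
  refine ⟨(M ^ m₀)⁻¹ * (1/2), by positivity, min 1 (M * c₀ ^ (1/m₀)), by positivity,
    min_le_left _ _, ?_⟩
  intro ε hε hεle x hx
  have hε1 : ε ≤ 1 := le_trans hεle (min_le_left _ _)
  have hεM : ε ≤ M * c₀ ^ (1/m₀) := le_trans hεle (min_le_right _ _)
  -- pointwise lower bound on the ball
  have hkey : ∀ y ∈ Metric.closedBall (0 : EuclideanSpace ℝ (Fin n)) R₂,
      (ε/M) ^ m₀ ≤ ρ (ε⁻¹ • (x - y)) := by
    intro y hy
    have hxy : ‖x - y‖ ≤ M := by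
      have h1 : ‖x‖ ≤ r := by
        have := hr hx; simpa [Metric.mem_closedBall, dist_eq_norm] using this
      have h2 : ‖y‖ ≤ R₂ := by simpa [Metric.mem_closedBall, dist_eq_norm] using hy
      calc ‖x - y‖ ≤ ‖x‖ + ‖y‖ := norm_sub_le x y
        _ ≤ max r 0 + R₂ := add_le_add (le_trans h1 (le_max_left _ _)) h2
        _ ≤ M := by rw [hM]; linarith
    set z := ε⁻¹ • (x - y) with hz
    have hεMc : (ε/M) ^ m₀ ≤ c₀ := by
      have h1 : ε / M ≤ c₀ ^ (1/m₀) := by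
        rw [div_le_iff₀ hMpos]; linarith [hεM]
      calc (ε/M) ^ m₀ ≤ (c₀ ^ (1/m₀)) ^ m₀ :=
            Real.rpow_le_rpow (by positivity) h1 hm₀pos.le
        _ = c₀ := by
            rw [one_div, Real.rpow_inv_rpow hc₀pos.le hm₀pos.ne']
    rcases le_or_gt ‖z‖ 1 with hle | hgt
    · refine le_trans hεMc ?_
      exact hz₀min (by simpa [Metric.mem_closedBall, dist_eq_norm] using hle)
    · have hρz := hρ_low z hgt.le
      refine le_trans ?_ hρz
      have hznorm : ‖z‖ ≤ M / ε := by
        rw [hz, norm_smul]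
        simp only [norm_inv, Real.norm_eq_abs, abs_of_pos hε]
        rw [div_eq_inv_mul]
        exact mul_le_mul_of_nonneg_left hxy (by positivity)
      have hzpos : (0:ℝ) < ‖z‖ := lt_trans one_pos hgt
      rw [Real.rpow_neg (norm_nonneg z), ← Real.inv_rpow (norm_nonneg z)]
      apply Real.rpow_le_rpow (by positivity) _ hm₀pos.le
      have h5 : (M/ε)⁻¹ ≤ ‖z‖⁻¹ := inv_anti₀ hzpos hznorm
      rwa [inv_div] at h5
  -- integral bound
  have hint := hρ.integrable_comp (μ := μ) hε x
  have h2 : (ε/M) ^ m₀ * (μ (Metric.closedBall 0 R₂)).toReal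
      ≤ ∫ y in Metric.closedBall (0 : EuclideanSpace ℝ (Fin n)) R₂, ρ (ε⁻¹ • (x - y)) ∂μ :=
    by have := setIntegral_ge_of_const_le measurableSet_closedBall (measure_ne_top μ _) hkey
         hint.integrableOn
       rw [smul_eq_mul, mul_comm] at this; exact this
  have h3 : ∫ y in Metric.closedBall (0 : EuclideanSpace ℝ (Fin n)) R₂, ρ (ε⁻¹ • (x - y)) ∂μ
      ≤ cv μ ε ρ x :=
    setIntegral_le_integral hint (Filter.Eventually.of_forall fun y => (hρpos _).le)
  have h4 : (M ^ m₀)⁻¹ * (1/2) * ε ^ m₀ ≤ (ε/M) ^ m₀ * (μ (Metric.closedBall 0 R₂)).toReal := by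
    have hdiv : (ε/M) ^ m₀ = ε ^ m₀ * (M ^ m₀)⁻¹ := by
      rw [Real.div_rpow hε.le hMpos.le, div_eq_mul_inv]
    rw [hdiv]
    have hA : (0:ℝ) < ε ^ m₀ * (M ^ m₀)⁻¹ := by
      have := Real.rpow_pos_of_pos hε m₀
      have := Real.rpow_pos_of_pos hMpos m₀
      positivity
    calc (M ^ m₀)⁻¹ * (1/2) * ε ^ m₀ = (ε ^ m₀ * (M ^ m₀)⁻¹) * (1/2) := by ring
      _ ≤ (ε ^ m₀ * (M ^ m₀)⁻¹) * (μ (Metric.closedBall 0 R₂)).toReal :=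
          mul_le_mul_of_nonneg_left hR₂ hA.le
  linarith
end lower2
section helpers
variable {n : ℕ}

lemma inv_pow_eq_rpow {ε : ℝ} (hε : 0 < ε) (k : ℕ) : (ε⁻¹)^k = ε ^ (-(k:ℝ)) := by
  rw [Real.rpow_neg hε.le, Real.rpow_natCast, inv_pow]

lemma rpow_neg_mono {ε : ℝ} (hε : 0 < ε) (hε1 : ε ≤ 1) {N M : ℝ} (h : N ≤ M) :
    ε ^ (-N) ≤ ε ^ (-M) :=
  Real.rpow_le_rpow_of_exponent_ge hε hε1 (neg_le_neg h)

lemma list_term_bound {ι : Type*} (K : Set (EuclideanSpace ℝ (Fin n))) (ε₁ : ℝ)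
    (hε₁ : ε₁ ≤ 1) (L : List ι) (T : ι → ℝ → EuclideanSpace ℝ (Fin n) → ℝ)
    (h : ∀ p ∈ L, ∃ C > (0:ℝ), ∃ N : ℕ, ∀ ε : ℝ, 0 < ε → ε ≤ ε₁ → ∀ x ∈ K,
      |T p ε x| ≤ C * ε ^ (-(N:ℝ))) :
    ∃ C > (0:ℝ), ∃ N : ℕ, ∀ ε : ℝ, 0 < ε → ε ≤ ε₁ → ∀ x ∈ K,
      |(L.map (fun p => T p ε x)).sum| ≤ C * ε ^ (-(N:ℝ)) := by
  induction L with
  | nil =>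
    refine ⟨1, one_pos, 0, fun ε hε hεle x hx => ?_⟩
    simp [Real.rpow_natCast]
  | cons a L ih =>
    obtain ⟨C₁, hC₁, N₁, h₁⟩ := h a (by simp)
    obtain ⟨C₂, hC₂, N₂, h₂⟩ := ih fun p hp => h p (by simp [hp])
    refine ⟨C₁ + C₂, by positivity, max N₁ N₂, fun ε hε hεle x hx => ?_⟩
    have hε1 : ε ≤ 1 := le_trans hεle hε₁
    have e₁ : ε ^ (-(N₁:ℝ)) ≤ ε ^ (-(max N₁ N₂ : ℕ):ℝ) :=
      rpow_neg_mono hε hε1 (by exact_mod_cast le_max_left N₁ N₂)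
    have e₂ : ε ^ (-(N₂:ℝ)) ≤ ε ^ (-(max N₁ N₂ : ℕ):ℝ) :=
      rpow_neg_mono hε hε1 (by exact_mod_cast le_max_right N₁ N₂)
    simp only [List.map_cons, List.sum_cons]
    calc |T a ε x + (L.map (fun p => T p ε x)).sum|
        ≤ |T a ε x| + |(L.map (fun p => T p ε x)).sum| := abs_add_le _ _
      _ ≤ C₁ * ε ^ (-(N₁:ℝ)) + C₂ * ε ^ (-(N₂:ℝ)) :=
          add_le_add (h₁ ε hε hεle x hx) (h₂ ε hε hεle x hx)
      _ ≤ C₁ * ε ^ (-(max N₁ N₂ : ℕ):ℝ) + C₂ * ε ^ (-(max N₁ N₂ : ℕ):ℝ) :=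
          add_le_add (mul_le_mul_of_nonneg_left e₁ hC₁.le)
            (mul_le_mul_of_nonneg_left e₂ hC₂.le)
      _ = (C₁ + C₂) * ε ^ (-(max N₁ N₂ : ℕ):ℝ) := by ring
end helpers
section main
variable {n : ℕ} {μ : Measure (EuclideanSpace ℝ (Fin n))} [IsProbabilityMeasure μ]

lemma sqrt_cv_bound (ρ : EuclideanSpace ℝ (Fin n) → ℝ) (hρ : Adm ρ) (hρpos : ∀ x, 0 < ρ x)
    (m₀ : ℝ) (hm₀pos : 0 < m₀)
    (hρ_low : ∀ z : EuclideanSpace ℝ (Fin n), 1 ≤ ‖z‖ → ‖z‖ ^ (-m₀) ≤ ρ z)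
    (K : Set (EuclideanSpace ℝ (Fin n))) (hK : IsCompact K) :
    ∃ ε₁ : ℝ, 0 < ε₁ ∧ ε₁ ≤ 1 ∧ ∀ α : List (Fin n), ∃ C > (0:ℝ), ∃ N : ℕ,
      ∀ ε : ℝ, 0 < ε → ε ≤ ε₁ → ∀ x ∈ K,
        |multiDeriv α (fun z => Real.sqrt (cv μ ε ρ z)) x| ≤ C * ε ^ (-(N:ℝ)) := by
  obtain ⟨c, hc, ε₁, hε₁pos, hε₁le, hlow⟩ := cv_lower (μ := μ) ρ hρ hρpos m₀ hm₀pos hρ_low K hK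
  obtain ⟨B₀, hB₀⟩ := hρ.2 []
  have hB₀0 : 0 ≤ B₀ := le_trans (abs_nonneg _) (hB₀ 0)
  refine ⟨ε₁, hε₁pos, hε₁le, ?_⟩
  set ψ : ℝ → EuclideanSpace ℝ (Fin n) → ℝ := fun ε z => Real.sqrt (cv μ ε ρ z) with hψdef
  have hψsmooth : ∀ ε : ℝ, 0 < ε → ContDiff ℝ ∞ (ψ ε) := by
    intro ε hε
    rw [contDiff_iff_contDiffAt]
    intro x
    exact ContDiffAt.sqrt ((cv_contDiff hρ hε).contDiffAt) (cv_pos hρ hρpos hε x).ne'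
  have hsq : ∀ ε : ℝ, 0 < ε → (fun x => ψ ε x * ψ ε x) = cv μ ε ρ := by
    intro ε hε; funext x; exact Real.mul_self_sqrt (cv_pos hρ hρpos hε x).le
  set m₁ : ℕ := ⌈m₀⌉₊ with hm₁
  have hm₀m₁ : m₀ / 2 ≤ (m₁:ℝ) := le_trans (by linarith) (Nat.le_ceil m₀)
  have hψlow : ∀ ε : ℝ, 0 < ε → ε ≤ ε₁ → ∀ x ∈ K,
      Real.sqrt c * ε ^ (m₁:ℝ) ≤ ψ ε x := by
    intro ε hε hεle x hx
    have hε1 : ε ≤ 1 := le_trans hεle hε₁le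
    have h2 : Real.sqrt (c * ε ^ m₀) ≤ ψ ε x := Real.sqrt_le_sqrt (hlow ε hε hεle x hx)
    have h3 : Real.sqrt (c * ε ^ m₀) = Real.sqrt c * ε ^ (m₀/2) := by
      rw [Real.sqrt_mul hc.le, Real.sqrt_eq_rpow (ε ^ m₀), ← Real.rpow_mul hε.le,
        show m₀ * (1/2) = m₀/2 by ring]
    have h4 : ε ^ (m₁:ℝ) ≤ ε ^ (m₀/2) :=
      Real.rpow_le_rpow_of_exponent_ge hε hε1 hm₀m₁
    calc Real.sqrt c * ε ^ (m₁:ℝ) ≤ Real.sqrt c * ε ^ (m₀/2) :=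
          mul_le_mul_of_nonneg_left h4 (Real.sqrt_nonneg c)
      _ = Real.sqrt (c * ε ^ m₀) := h3.symm
      _ ≤ ψ ε x := h2
  have hψup : ∀ ε : ℝ, 0 < ε → ∀ x, |ψ ε x| ≤ Real.sqrt B₀ := by
    intro ε hε x
    rw [abs_of_nonneg (Real.sqrt_nonneg _)]
    apply Real.sqrt_le_sqrt
    exact le_trans (le_abs_self _) (cv_abs_le hε (fun z => hB₀ z) x)
  suffices H : ∀ k : ℕ, ∀ α : List (Fin n), α.length ≤ k → ∃ C > (0:ℝ), ∃ N : ℕ,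
      ∀ ε : ℝ, 0 < ε → ε ≤ ε₁ → ∀ x ∈ K, |multiDeriv α (ψ ε) x| ≤ C * ε ^ (-(N:ℝ)) by
    intro α; exact H α.length α le_rfl
  intro k
  induction k with
  | zero =>
    intro α hα
    have hnil : α = [] := List.length_eq_zero_iff.mp (Nat.le_zero.mp hα)
    subst hnil
    refine ⟨Real.sqrt B₀ + 1, by positivity, 0, fun ε hε hεle x hx => ?_⟩
    have : multiDeriv [] (ψ ε) = ψ ε := rfl
    rw [this]
    have := hψup ε hε x
    simp only [Nat.cast_zero, neg_zero, Real.rpow_zero, mul_one]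
    linarith
  | succ k ih =>
    intro α hα
    rcases le_or_gt α.length k with hk | hk
    · exact ih α hk
    have hαne : α ≠ [] := by
      intro h; subst h; simp at hk
    obtain ⟨mid, hmid, hmidlen⟩ := splits_structure α hαne
    obtain ⟨Bα, hBα⟩ := hρ.2 α
    have hBα0 : 0 ≤ Bα := le_trans (abs_nonneg _) (hBα 0)
    obtain ⟨C₂, hC₂, N₂, h₂⟩ := list_term_bound K ε₁ hε₁le mid
      (fun p ε x => multiDeriv p.1 (ψ ε) x * multiDeriv p.2 (ψ ε) x) (by
        intro p hp
        obtain ⟨C₁', hC₁', N₁', h₁'⟩ := ih p.1 (by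
          have := (hmidlen p hp).1; omega)
        obtain ⟨C₂', hC₂', N₂', h₂'⟩ := ih p.2 (by
          have := (hmidlen p hp).2; omega)
        refine ⟨C₁' * C₂', by positivity, N₁' + N₂', fun ε hε hεle x hx => ?_⟩
        rw [abs_mul]
        calc |multiDeriv p.1 (ψ ε) x| * |multiDeriv p.2 (ψ ε) x|
            ≤ (C₁' * ε ^ (-(N₁':ℝ))) * (C₂' * ε ^ (-(N₂':ℝ))) :=
              mul_le_mul (h₁' ε hε hεle x hx) (h₂' ε hε hεle x hx) (abs_nonneg _)
                (by positivity)
          _ = (C₁' * C₂') * (ε ^ (-(N₁':ℝ)) * ε ^ (-(N₂':ℝ))) := by ring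
          _ = (C₁' * C₂') * ε ^ (-((N₁' + N₂' : ℕ)):ℝ) := by
              rw [← Real.rpow_add hε]
              congr 1
              push_cast
              ring)
    set Nmax : ℕ := max α.length N₂ with hNmax
    set E : ℝ := Bα + 1 + C₂ with hE
    have hEpos : 0 < E := by positivity
    refine ⟨E/2 * (Real.sqrt c)⁻¹, by positivity, Nmax + m₁, fun ε hε hεle x hx => ?_⟩
    have hε1 : ε ≤ 1 := le_trans hεle hε₁le
    set S : ℝ := (mid.map (fun p => multiDeriv p.1 (ψ ε) x * multiDeriv p.2 (ψ ε) x)).sum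
      with hS
    -- the Leibniz identity
    have h0 : multiDeriv α (cv μ ε ρ) = multiDeriv α (fun x => ψ ε x * ψ ε x) := by
      rw [hsq ε hε]
    have h1 := multiDeriv_mul (hψsmooth ε hε) (hψsmooth ε hε) α
    have h2 : multiDeriv α (cv μ ε ρ) x
        = ((splits α).map
            (fun p => multiDeriv p.1 (ψ ε) x * multiDeriv p.2 (ψ ε) x)).sum := by
      rw [h0, h1]
    rw [hmid] at h2
    have h3 : multiDeriv α (cv μ ε ρ) x
        = multiDeriv α (ψ ε) x * ψ ε x + S + ψ ε x * multiDeriv α (ψ ε) x := by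
      rw [h2]
      simp only [List.map_cons, List.sum_cons, List.map_append, List.sum_append,
        List.map_map, List.map_nil, List.sum_nil]
      have e1 : multiDeriv ([] : List (Fin n)) (ψ ε) = ψ ε := rfl
      simp [e1, ← hS]
      ring
    -- bound on multiDeriv α cv
    have h4 : |multiDeriv α (cv μ ε ρ) x| ≤ Bα * ε ^ (-(α.length:ℝ)) := by
      rw [cv_multiDeriv hρ hε α]
      rw [inv_pow_eq_rpow hε]
      rw [abs_mul, abs_of_nonneg (Real.rpow_nonneg hε.le _)]
      rw [mul_comm]
      exact mul_le_mul_of_nonneg_right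
        (cv_abs_le hε (fun z => hBα z) x) (Real.rpow_nonneg hε.le _)
    have h5 : |S| ≤ C₂ * ε ^ (-(N₂:ℝ)) := h₂ ε hε hεle x hx
    -- combine
    have e₁ : ε ^ (-(α.length:ℝ)) ≤ ε ^ (-(Nmax:ℕ):ℝ) :=
      rpow_neg_mono hε hε1 (by exact_mod_cast le_max_left _ _)
    have e₂ : ε ^ (-(N₂:ℝ)) ≤ ε ^ (-(Nmax:ℕ):ℝ) :=
      rpow_neg_mono hε hε1 (by exact_mod_cast le_max_right _ _)
    have habs : 2 * (ψ ε x * |multiDeriv α (ψ ε) x|)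
        = |multiDeriv α (cv μ ε ρ) x - S| := by
      have hrw : multiDeriv α (cv μ ε ρ) x - S = 2 * (ψ ε x * multiDeriv α (ψ ε) x) := by
        rw [h3]; ring
      rw [hrw, abs_mul, abs_mul, abs_of_nonneg (by norm_num : (0:ℝ) ≤ 2),
        abs_of_nonneg (Real.sqrt_nonneg _)]
    have hup : |multiDeriv α (cv μ ε ρ) x - S|
        ≤ |multiDeriv α (cv μ ε ρ) x| + |S| := by
      have := abs_add_le (multiDeriv α (cv μ ε ρ) x) (-S)
      rw [abs_neg] at this
      rw [sub_eq_add_neg]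
      exact this
    have hmain : ψ ε x * |multiDeriv α (ψ ε) x| ≤ E/2 * ε ^ (-(Nmax:ℕ):ℝ) := by
      have h6 : 2 * (ψ ε x * |multiDeriv α (ψ ε) x|) ≤ E * ε ^ (-(Nmax:ℕ):ℝ) := by
        rw [habs]
        calc |multiDeriv α (cv μ ε ρ) x - S|
            ≤ |multiDeriv α (cv μ ε ρ) x| + |S| := hup
          _ ≤ Bα * ε ^ (-(α.length:ℝ)) + C₂ * ε ^ (-(N₂:ℝ)) := add_le_add h4 h5
          _ ≤ Bα * ε ^ (-(Nmax:ℕ):ℝ) + C₂ * ε ^ (-(Nmax:ℕ):ℝ) :=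
              add_le_add (mul_le_mul_of_nonneg_left e₁ hBα0)
                (mul_le_mul_of_nonneg_left e₂ hC₂.le)
          _ ≤ E * ε ^ (-(Nmax:ℕ):ℝ) := by
              have : (0:ℝ) ≤ ε ^ (-(Nmax:ℕ):ℝ) := Real.rpow_nonneg hε.le _
              nlinarith
      rw [div_mul_eq_mul_div, le_div_iff₀ (by norm_num : (0:ℝ) < 2)]
      linarith
    have hψge : Real.sqrt c * ε ^ (m₁:ℝ) ≤ ψ ε x := hψlow ε hε hεle x hx
    have hdpos : (0:ℝ) < Real.sqrt c * ε ^ (m₁:ℝ) := by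
      have : 0 < Real.sqrt c := Real.sqrt_pos.2 hc
      have : 0 < ε ^ (m₁:ℝ) := Real.rpow_pos_of_pos hε _
      positivity
    have hfin : |multiDeriv α (ψ ε) x| * (Real.sqrt c * ε ^ (m₁:ℝ))
        ≤ E/2 * ε ^ (-(Nmax:ℕ):ℝ) := by
      calc |multiDeriv α (ψ ε) x| * (Real.sqrt c * ε ^ (m₁:ℝ))
          ≤ |multiDeriv α (ψ ε) x| * ψ ε x :=
            mul_le_mul_of_nonneg_left hψge (abs_nonneg _)
        _ = ψ ε x * |multiDeriv α (ψ ε) x| := by ring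
        _ ≤ E/2 * ε ^ (-(Nmax:ℕ):ℝ) := hmain
    have hres : |multiDeriv α (ψ ε) x|
        ≤ E/2 * ε ^ (-(Nmax:ℕ):ℝ) / (Real.sqrt c * ε ^ (m₁:ℝ)) :=
      (le_div_iff₀ hdpos).2 hfin
    refine le_trans hres (le_of_eq ?_)
    rw [div_eq_mul_inv, mul_inv, ← Real.rpow_neg hε.le (m₁:ℝ)]
    have hrp : ε ^ (-(Nmax:ℕ):ℝ) * ε ^ (-(m₁:ℝ)) = ε ^ (-((Nmax + m₁:ℕ)):ℝ) := by
      rw [← Real.rpow_add hε]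
      push_cast
      ring_nf
    calc E/2 * ε ^ (-(Nmax:ℕ):ℝ) * ((Real.sqrt c)⁻¹ * ε ^ (-(m₁:ℝ)))
        = E/2 * (Real.sqrt c)⁻¹ * (ε ^ (-(Nmax:ℕ):ℝ) * ε ^ (-(m₁:ℝ))) := by ring
      _ = E/2 * (Real.sqrt c)⁻¹ * ε ^ (-((Nmax + m₁:ℕ)):ℝ) := by rw [hrp]
end main
/-- for a probability measure `μ` and a positive smooth mollifier
`ρ ∈ L¹ ∩ W^{∞,∞}` with `∫ρ = 1` and `ρ(x) ≥ |x|^{-m₀}` for `|x| ≥ 1` (`m₀ > n`),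
the net `φ_ε = √(μ * ρ_ε)` is `C^∞`-moderate: on each compact `K` and for each
multi-index `α`, `sup_{x ∈ K} |∂^α φ_ε(x)| ≤ C ε^{-N}` for small `ε`. -/
theorem stmt7 {n : ℕ} (μ : Measure (EuclideanSpace ℝ (Fin n))) [IsProbabilityMeasure μ]
    (ρ : EuclideanSpace ℝ (Fin n) → ℝ)
    (hρ_smooth : ContDiff ℝ (⊤ : ℕ∞) ρ)
    (hρ_bdd : ∀ l : List (Fin n), ∃ B, ∀ x, |multiDeriv l ρ x| ≤ B)
    (hρ_int : Integrable ρ) (hρ_pos : ∀ x, 0 < ρ x) (hρ_one : ∫ x, ρ x = 1)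
    (m₀ : ℝ) (hm₀ : (n : ℝ) < m₀)
    (hρ_low : ∀ z : EuclideanSpace ℝ (Fin n), 1 ≤ ‖z‖ → ‖z‖ ^ (-m₀) ≤ ρ z)
    (K : Set (EuclideanSpace ℝ (Fin n))) (hK : IsCompact K) (α : List (Fin n)) :
    ∃ C > (0 : ℝ), ∃ N : ℕ, ∃ ε₀ > (0 : ℝ), ∀ ε : ℝ, 0 < ε → ε < ε₀ → ∀ x ∈ K,
      |multiDeriv α
          (fun z => Real.sqrt (∫ y, ε ^ (-(n : ℝ)) * ρ (ε⁻¹ • (z - y)) ∂μ)) x|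
        ≤ C * ε ^ (-(N : ℝ)) := by
  have hρAdm : Adm ρ := ⟨hρ_smooth.of_le (by simp), hρ_bdd⟩
  have hm₀pos : 0 < m₀ := lt_of_le_of_lt (n.cast_nonneg) hm₀
  obtain ⟨ε₁, hε₁pos, hε₁le, hmain⟩ :=
    sqrt_cv_bound (μ := μ) ρ hρAdm hρ_pos m₀ hm₀pos hρ_low K hK
  obtain ⟨C, hC, N, hCN⟩ := hmain α
  refine ⟨C, hC, N + n, ε₁, hε₁pos, ?_⟩
  intro ε hε hεlt x hx
  have hεle : ε ≤ ε₁ := hεlt.le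
  have hε1 : ε ≤ 1 := le_trans hεle hε₁le
  have hfun : (fun z => Real.sqrt (∫ y, ε ^ (-(n : ℝ)) * ρ (ε⁻¹ • (z - y)) ∂μ))
      = fun z => ε ^ (-(n:ℝ)/2) * Real.sqrt (cv μ ε ρ z) := by
    funext z
    rw [show (∫ y, ε ^ (-(n : ℝ)) * ρ (ε⁻¹ • (z - y)) ∂μ)
        = ε ^ (-(n:ℝ)) * cv μ ε ρ z from integral_const_mul _ _,
      Real.sqrt_mul (Real.rpow_nonneg hε.le _)]
    congr 1
    rw [Real.sqrt_eq_rpow, ← Real.rpow_mul hε.le]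
    congr 1
    ring
  rw [hfun]
  have hψs : ContDiff ℝ ∞ (fun z => Real.sqrt (cv μ ε ρ z)) := by
    rw [contDiff_iff_contDiffAt]
    intro z
    exact ContDiffAt.sqrt ((cv_contDiff hρAdm hε).contDiffAt)
      (cv_pos hρAdm hρ_pos hε z).ne'
  rw [multiDeriv_const_mul _ hψs α]
  have hb := hCN ε hε hεle x hx
  have h1 : ε ^ (-(n:ℝ)/2) ≤ ε ^ (-(n:ℝ)) :=
    Real.rpow_le_rpow_of_exponent_ge hε hε1 (by
      have : (0:ℝ) ≤ (n:ℝ) := n.cast_nonneg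
      linarith)
  have h2 : (0:ℝ) ≤ ε ^ (-(n:ℝ)/2) := Real.rpow_nonneg hε.le _
  rw [abs_mul, abs_of_nonneg h2]
  calc ε ^ (-(n:ℝ)/2) * |multiDeriv α (fun z => Real.sqrt (cv μ ε ρ z)) x|
      ≤ ε ^ (-(n:ℝ)) * (C * ε ^ (-(N:ℝ))) :=
        mul_le_mul h1 hb (abs_nonneg _) (Real.rpow_nonneg hε.le _)
    _ = C * (ε ^ (-(N:ℝ)) * ε ^ (-(n:ℝ))) := by ring
    _ = C * ε ^ (-((N + n : ℕ)):ℝ) := by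
        rw [← Real.rpow_add hε]
        congr 1
        push_cast
        ring
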